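/- arXiv:1610.03298 — 2 statements merged into one kernel-verified Lean document; each statement's English description precedes it below -/
import Mathlib

section
/- Let G be a graph, X ⊆ V(G) such that Torso_G(X) has treewidth at most k and every connected component of G − X has at most q vertices. Then the treewidth of G is at most q + k. -/
open SimpleGraph

/-- The torso of `X` in `G`: graph on `X` with an edge between `x₁, x₂ ∈ X` whenever
`x₁x₂ ∈ E(G)` or both have a neighbor in the same connected component of `G − X`. -/
def torso {V : Type} (G : SimpleGraph V) (X : Set V) : SimpleGraph X where
  Adj a b := a ≠ b ∧ (G.Adj a b ∨ ∃ u v : (Xᶜ : Set V),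
    G.Adj (a : V) (u : V) ∧ G.Adj (b : V) (v : V) ∧ (G.induce (Xᶜ : Set V)).Reachable u v)
  symm := ⟨by
    rintro a b ⟨hne, h | ⟨u, v, h1, h2, h3⟩⟩
    · exact ⟨hne.symm, Or.inl h.symm⟩
    · exact ⟨hne.symm, Or.inr ⟨v, u, h2, h1, h3.symm⟩⟩⟩
  loopless := ⟨fun a h => h.1 rfl⟩

/-- `(T, B)` is a tree decomposition of `G`. -/
def IsTreeDecomp {V t : Type} (G : SimpleGraph V) (T : SimpleGraph t) (B : t → Set V) : Prop :=
  T.IsTree ∧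
  (∀ v : V, ∃ i, v ∈ B i) ∧
  (∀ ⦃u v : V⦄, G.Adj u v → ∃ i, u ∈ B i ∧ v ∈ B i) ∧
  (∀ v : V, (T.induce {i | v ∈ B i}).Connected)

/-- `G` has treewidth at most `k`. -/
def HasTreewidthLE {V : Type} (G : SimpleGraph V) (k : ℕ) : Prop :=
  ∃ (t : Type) (T : SimpleGraph t) (B : t → Set V),
    IsTreeDecomp G T B ∧ ∀ i, (B i).Finite ∧ (B i).ncard ≤ k + 1

/-!
Take a tree decomposition of the torso and hang below it one new leaf bag per component `C` of
`G − X`, consisting of `C` and its attachment set `N(C) ⊆ X`. Since `N(C)` is a clique of the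
torso and subtrees of a tree have the Helly property, `N(C)` lies in a single bag, where the new
leaf is attached; this keeps the bags containing a vertex of `X` connected. The new bags have at
most `q + (k + 1)` vertices.
-/

namespace SimpleGraph

variable {t : Type} {T : SimpleGraph t}

lemma Walk.exists_mem_support_forall_mem_support_takeUntil [DecidableEq t] (P : t → Prop)
    {a c : t} (q : T.Walk a c) (hc : P c) :
    ∃ (m : t) (hm : m ∈ q.support), P m ∧
      ∀ x ∈ (q.takeUntil m hm).support, P x → x = m := by
  induction q with
  | nil => exact ⟨_, by simp, hc, fun x hx _ => by simpa using hx⟩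
  | @cons a v c h p ih =>
    by_cases ha : P a
    · exact ⟨a, p.cons h |>.start_mem_support, ha, fun x hx _ => by simpa using hx⟩
    · obtain ⟨m, hm, hPm, hmin⟩ := ih hc
      have hne : a ≠ m := fun e => ha (e ▸ hPm)
      refine ⟨m, List.mem_cons_of_mem _ hm, hPm, fun x hx hPx => ?_⟩
      simp only [Walk.takeUntil, hne, ↓reduceDIte, Walk.support_cons, List.mem_cons] at hx
      rcases hx with rfl | hx
      · exact absurd hPx ha
      · exact hmin x hx hPx

lemma Connected.exists_isPath_support_subset {A : Set t} (hA : (T.induce A).Connected)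
    {a b : t} (ha : a ∈ A) (hb : b ∈ A) :
    ∃ p : T.Walk a b, p.IsPath ∧ ∀ x ∈ p.support, x ∈ A := by
  classical
  obtain ⟨w⟩ := hA ⟨a, ha⟩ ⟨b, hb⟩
  refine ⟨(w.map (Embedding.induce A).toHom).bypass, Walk.bypass_isPath _, fun x hx => ?_⟩
  obtain ⟨y, -, rfl⟩ :=
    List.mem_map.1 (Walk.support_map _ _ ▸ Walk.support_bypass_subset_support _ hx)
  exact y.2

namespace IsAcyclic

lemma support_subset_of_isPath (hT : T.IsAcyclic) {A : Set t} (hA : (T.induce A).Connected)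
    {a b : t} (ha : a ∈ A) (hb : b ∈ A) {p : T.Walk a b} (hp : p.IsPath) :
    ∀ x ∈ p.support, x ∈ A := by
  obtain ⟨q, hq, hqA⟩ := hA.exists_isPath_support_subset ha hb
  obtain rfl : p = q :=
    congrArg Subtype.val ((hT.subsingleton_path a b).elim ⟨p, hp⟩ ⟨q, hq⟩)
  exact hqA

lemma connected_induce_inter (hT : T.IsAcyclic) {A B : Set t} (hA : (T.induce A).Connected)
    (hB : (T.induce B).Connected) (hAB : (A ∩ B).Nonempty) : (T.induce (A ∩ B)).Connected := by
  obtain ⟨a, ha⟩ := hAB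
  rw [connected_iff_exists_forall_reachable]
  refine ⟨⟨a, ha⟩, ?_⟩
  rintro ⟨b, hb⟩
  obtain ⟨p, hp, hpA⟩ := hA.exists_isPath_support_subset ha.1 hb.1
  exact (p.induce (A ∩ B) fun x hx =>
    ⟨hpA x hx, hT.support_subset_of_isPath hB ha.2 hb.2 hp x hx⟩).reachable

lemma exists_median (hT : T.IsAcyclic) {a b c : t} {p : T.Walk a b} {q : T.Walk a c}
    {r : T.Walk b c} (hp : p.IsPath) (hq : q.IsPath) (hr : r.IsPath) :
    ∃ m ∈ p.support, m ∈ q.support ∧ m ∈ r.support := by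
  classical
  obtain ⟨m, hmq, hmr, hfirst⟩ :=
    q.exists_mem_support_forall_mem_support_takeUntil (· ∈ r.support) r.end_mem_support
  set q₁ := q.takeUntil m hmq
  set r₁ := r.takeUntil m hmr
  have hr₁ : (m :: r₁.reverse.support.tail).Nodup :=
    r₁.reverse.cons_tail_support ▸ (hr.takeUntil hmr).reverse.support_nodup
  have hpath : (q₁.append r₁.reverse).IsPath := by
    rw [Walk.isPath_def, Walk.support_append]
    refine (hq.takeUntil hmq).support_nodup.append (List.nodup_cons.1 hr₁).2
      fun x hx₁ hx₂ => ?_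
    have hxr : x ∈ r.support := by
      have := List.mem_of_mem_tail hx₂
      rw [Walk.support_reverse, List.mem_reverse] at this
      exact r.support_takeUntil_subset_support hmr this
    exact (List.nodup_cons.1 hr₁).1 (hfirst x hx₁ hxr ▸ hx₂)
  obtain rfl : p = q₁.append r₁.reverse :=
    congrArg Subtype.val ((hT.subsingleton_path a b).elim ⟨p, hp⟩ ⟨_, hpath⟩)
  exact ⟨m, Walk.mem_support_append_iff _ _ |>.2 (.inl q₁.end_mem_support), hmq, hmr⟩

lemma inter_inter_nonempty (hT : T.IsAcyclic) {A B C : Set t}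
    (hA : (T.induce A).Connected) (hB : (T.induce B).Connected) (hC : (T.induce C).Connected)
    (hAB : (A ∩ B).Nonempty) (hAC : (A ∩ C).Nonempty) (hBC : (B ∩ C).Nonempty) :
    (A ∩ B ∩ C).Nonempty := by
  obtain ⟨a, haA, haB⟩ := hAB
  obtain ⟨b, hbA, hbC⟩ := hAC
  obtain ⟨c, hcB, hcC⟩ := hBC
  obtain ⟨p, hp, hpA⟩ := hA.exists_isPath_support_subset haA hbA
  obtain ⟨q, hq, hqB⟩ := hB.exists_isPath_support_subset haB hcB
  obtain ⟨r, hr, hrC⟩ := hC.exists_isPath_support_subset hbC hcC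
  obtain ⟨m, hmp, hmq, hmr⟩ := hT.exists_median hp hq hr
  exact ⟨m, ⟨hpA m hmp, hqB m hmq⟩, hrC m hmr⟩

lemma exists_mem_of_pairwise_inter_nonempty [Nonempty t] (hT : T.IsAcyclic) {ι : Type}
    (S : Finset ι) (A : ι → Set t) (hA : ∀ i ∈ S, (T.induce (A i)).Connected)
    (hS : ∀ i ∈ S, ∀ j ∈ S, (A i ∩ A j).Nonempty) : ∃ m, ∀ i ∈ S, m ∈ A i := by
  classical
  induction S using Finset.induction generalizing A with
  | empty => exact ⟨Classical.arbitrary t, by simp⟩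
  | @insert i S hi ih =>
    rcases S.eq_empty_or_nonempty with rfl | ⟨j₀, hj₀⟩
    · obtain ⟨m, hm, -⟩ := hS i (by simp) i (by simp)
      exact ⟨m, by simpa using hm⟩
    have hA' : ∀ j ∈ S, (T.induce (A j)).Connected := fun j hj => hA j (by simp [hj])
    have hS' : ∀ j ∈ S, ∀ l ∈ S, (A j ∩ A l).Nonempty :=
      fun j hj l hl => hS j (by simp [hj]) l (by simp [hl])
    have hSi : ∀ j ∈ S, (A j ∩ A i).Nonempty := fun j hj => hS j (by simp [hj]) i (by simp)
    -- restrict the family to `A i`; pairwise intersections stay nonempty by the case of three sets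
    obtain ⟨m, hm⟩ := ih (fun j => A j ∩ A i)
      (fun j hj => hT.connected_induce_inter (hA' j hj) (hA i (by simp)) (hSi j hj))
      (fun j hj l hl => by
        obtain ⟨m, ⟨hmj, hml⟩, hmi⟩ := hT.inter_inter_nonempty (hA' j hj) (hA' l hl)
          (hA i (by simp)) (hS' j hj l hl) (hSi j hj) (hSi l hl)
        exact ⟨m, ⟨hmj, hmi⟩, hml, hmi⟩)
    refine ⟨m, fun j hj => ?_⟩
    rcases Finset.mem_insert.1 hj with rfl | hj
    · exact (hm j₀ hj₀).2
    · exact (hm j hj).1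

lemma of_induce_of_subsingleton_neighborSet {V : Type} {G : SimpleGraph V} {s : Set V}
    (hs : (G.induce s).IsAcyclic) (hout : ∀ v ∉ s, (G.neighborSet v).Subsingleton) :
    G.IsAcyclic := by
  intro v p hp
  -- a vertex of a cycle has two neighbours on it, so the cycle stays inside `s`
  have hsupp : ∀ x ∈ p.support, x ∈ s := by
    intro x hx
    by_contra hxs
    obtain ⟨y, z, hyz, hnbr⟩ := Set.ncard_eq_two.1 (hp.ncard_neighborSet_toSubgraph_eq_two hx)
    have hsub := p.toSubgraph.neighborSet_subset x
    exact hyz (hout x hxs (hsub (hnbr ▸ by simp)) (hsub (hnbr ▸ by simp)))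
  refine hs (p.induce s hsupp) ?_
  rw [← Walk.isCycle_map_iff_of_injective (f := (Embedding.induce s).toHom) Subtype.val_injective,
    Walk.map_induce]
  exact hp

end IsAcyclic

variable {t ι : Type}

def attachLeaves (T : SimpleGraph t) (f : ι → t) : SimpleGraph (t ⊕ ι) where
  Adj
    | .inl i, .inl j => T.Adj i j
    | .inl i, .inr c => i = f c
    | .inr c, .inl i => i = f c
    | .inr _, .inr _ => False
  symm := ⟨by rintro (i | c) (j | d) h <;> first | exact h | exact h.symm⟩
  loopless := ⟨by rintro (i | c) h <;> first | exact T.loopless.irrefl i h | exact h⟩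

variable (T : SimpleGraph t) (f : ι → t)

def attachLeavesInl : T ↪g attachLeaves T f := ⟨.inl, Iff.rfl⟩

lemma attachLeaves_adj_inr_inl (c : ι) : (attachLeaves T f).Adj (.inr c) (.inl (f c)) := rfl

lemma attachLeaves_neighborSet_inr (c : ι) :
    (attachLeaves T f).neighborSet (.inr c) = {.inl (f c)} := by
  ext (x | d)
  · exact Sum.inl_injective.eq_iff.symm
  · exact ⟨False.elim, Sum.inr_ne_inl⟩

variable {T}

lemma attachLeaves_isTree (hT : T.IsTree) : (attachLeaves T f).IsTree where
  connected := by
    obtain ⟨i₀⟩ := hT.connected.nonempty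
    have hinl (j : t) : (attachLeaves T f).Reachable (.inl i₀) (.inl j) :=
      (hT.connected i₀ j).map (attachLeavesInl T f).toHom
    refine (connected_iff_exists_forall_reachable _).2 ⟨.inl i₀, ?_⟩
    rintro (j | c)
    · exact hinl j
    · exact (hinl (f c)).trans (attachLeaves_adj_inr_inl T f c).symm.reachable
  isAcyclic := by
    refine .of_induce_of_subsingleton_neighborSet (s := Set.range Sum.inl)
      ((attachLeavesInl T f).isoInduceRange.isAcyclic_iff.1 hT.isAcyclic) ?_
    rintro (i | c) hc
    · exact absurd ⟨i, rfl⟩ hc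
    · exact attachLeaves_neighborSet_inr T f c ▸ Set.subsingleton_singleton

lemma connected_induce_attachLeaves {U : Set (t ⊕ ι)}
    (hU : (T.induce (Sum.inl ⁻¹' U)).Connected)
    (hleaf : ∀ c, Sum.inr c ∈ U → Sum.inl (f c) ∈ U) :
    ((attachLeaves T f).induce U).Connected := by
  obtain ⟨⟨i₀, hi₀⟩⟩ := hU.nonempty
  let φ : T.induce (Sum.inl ⁻¹' U) →g (attachLeaves T f).induce U :=
    ⟨fun i => ⟨.inl i, i.2⟩, fun h => h⟩
  have hinl (j : t) (hj : Sum.inl j ∈ U) :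
      ((attachLeaves T f).induce U).Reachable ⟨.inl i₀, hi₀⟩ ⟨.inl j, hj⟩ :=
    (hU ⟨i₀, hi₀⟩ ⟨j, hj⟩).map φ
  refine (connected_iff_exists_forall_reachable _).2 ⟨⟨.inl i₀, hi₀⟩, ?_⟩
  rintro ⟨j | c, hx⟩
  · exact hinl j hx
  · exact (hinl (f c) (hleaf c hx)).trans
      (Adj.reachable (G := (attachLeaves T f).induce U) (attachLeaves_adj_inr_inl T f c).symm)

end SimpleGraph

lemma IsTreeDecomp.exists_bag_superset_of_isClique {V t : Type} {G : SimpleGraph V}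
    {T : SimpleGraph t} {B : t → Set V} (hTB : IsTreeDecomp G T B) {S : Set V} (hfin : S.Finite)
    (hS : G.IsClique S) : ∃ i, S ⊆ B i := by
  obtain ⟨hT, hcover, hedge, hconn⟩ := hTB
  have : Nonempty t := hT.connected.nonempty
  obtain ⟨i, hi⟩ := hT.isAcyclic.exists_mem_of_pairwise_inter_nonempty hfin.toFinset
    (fun x => {i | x ∈ B i}) (fun x _ => hconn x) fun x hx y hy => by
      rcases eq_or_ne x y with rfl | hxy
      · obtain ⟨i, hi⟩ := hcover x
        exact ⟨i, hi, hi⟩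
      · exact hedge (hS (by simpa using hx) (by simpa using hy) hxy)
  exact ⟨i, fun x hx => hi x (by simpa using hx)⟩

section Torso

variable {V : Type} (G : SimpleGraph V) (X : Set V)

def attachmentSet (C : (G.induce Xᶜ).ConnectedComponent) : Set X :=
  {x | ∃ u ∈ C.supp, G.Adj x u}

lemma isClique_attachmentSet (C : (G.induce Xᶜ).ConnectedComponent) :
    (torso G X).IsClique (attachmentSet G X C) := by
  rintro x ⟨u, hu, hxu⟩ y ⟨v, hv, hyv⟩ hxy
  exact ⟨hxy, .inr ⟨u, v, hxu, hyv, ConnectedComponent.exact (hu.trans hv.symm)⟩⟩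

def componentBag (C : (G.induce Xᶜ).ConnectedComponent) : Set V :=
  Subtype.val '' C.supp ∪ Subtype.val '' attachmentSet G X C

variable {G X}

lemma coe_mem_componentBag_iff {C : (G.induce Xᶜ).ConnectedComponent} {x : X} :
    (x : V) ∈ componentBag G X C ↔ x ∈ attachmentSet G X C := by
  refine ⟨?_, fun hx => .inr ⟨x, hx, rfl⟩⟩
  rintro (⟨u, -, hu⟩ | ⟨y, hy, hyx⟩)
  · exact absurd (hu ▸ x.2) u.2
  · exact Subtype.val_injective hyx ▸ hy

lemma mem_componentBag_iff_of_notMem {C : (G.induce Xᶜ).ConnectedComponent} {v : V}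
    (hv : v ∉ X) :
    v ∈ componentBag G X C ↔ (G.induce Xᶜ).connectedComponentMk ⟨v, hv⟩ = C := by
  refine ⟨?_, fun h => .inl ⟨⟨v, hv⟩, h, rfl⟩⟩
  rintro (⟨u, hu, rfl⟩ | ⟨x, -, hx⟩)
  · exact hu
  · exact absurd (hx ▸ x.2) hv

lemma exists_componentBag_of_adj {u v : V} (huv : G.Adj u v) (hv : v ∉ X) :
    ∃ C, u ∈ componentBag G X C ∧ v ∈ componentBag G X C := by
  set C := (G.induce Xᶜ).connectedComponentMk ⟨v, hv⟩
  refine ⟨C, ?_, (mem_componentBag_iff_of_notMem hv).2 rfl⟩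
  by_cases hu : u ∈ X
  · exact coe_mem_componentBag_iff (x := ⟨u, hu⟩) |>.2 ⟨⟨v, hv⟩, rfl, huv⟩
  · exact (mem_componentBag_iff_of_notMem hu).2
      (ConnectedComponent.connectedComponentMk_eq_of_adj (G := G.induce Xᶜ)
        (v := ⟨u, hu⟩) huv)

lemma IsTreeDecomp.attachLeaves_componentBag {t : Type} {T : SimpleGraph t} {B : t → Set X}
    (hTB : IsTreeDecomp (torso G X) T B) (f : (G.induce Xᶜ).ConnectedComponent → t)
    (hf : ∀ C, attachmentSet G X C ⊆ B (f C)) :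
    IsTreeDecomp G (attachLeaves T f)
      (Sum.elim (fun i => Subtype.val '' B i) (componentBag G X)) := by
  obtain ⟨hT, hcover, hedge, hconn⟩ := hTB
  refine ⟨attachLeaves_isTree f hT, fun v => ?_, fun u v huv => ?_, fun v => ?_⟩
  · by_cases hv : v ∈ X
    · obtain ⟨i, hi⟩ := hcover ⟨v, hv⟩
      exact ⟨.inl i, ⟨v, hv⟩, hi, rfl⟩
    · exact ⟨.inr _, (mem_componentBag_iff_of_notMem hv).2 rfl⟩
  · by_cases hv : v ∈ X
    · by_cases hu : u ∈ X
      · obtain ⟨i, hui, hvi⟩ := hedge (u := ⟨u, hu⟩) (v := ⟨v, hv⟩)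
          ⟨fun h => huv.ne (congrArg Subtype.val h), .inl huv⟩
        exact ⟨.inl i, ⟨_, hui, rfl⟩, ⟨_, hvi, rfl⟩⟩
      · obtain ⟨C, hvC, huC⟩ := exists_componentBag_of_adj huv.symm hu
        exact ⟨.inr C, huC, hvC⟩
    · obtain ⟨C, hC⟩ := exists_componentBag_of_adj huv hv
      exact ⟨.inr C, hC⟩
  · by_cases hv : v ∈ X
    · have hbags :
          Sum.inl ⁻¹' {n | v ∈ Sum.elim (fun i => Subtype.val '' B i) (componentBag G X) n} =
            {i | ⟨v, hv⟩ ∈ B i} := by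
        ext i
        exact Subtype.val_injective.mem_set_image (a := ⟨v, hv⟩)
      refine connected_induce_attachLeaves f (hbags ▸ hconn ⟨v, hv⟩) fun C hC =>
        ⟨⟨v, hv⟩, hf C (coe_mem_componentBag_iff.1 hC), rfl⟩
    · have hbags : {n | v ∈ Sum.elim (fun i => Subtype.val '' B i) (componentBag G X) n} =
          {.inr ((G.induce Xᶜ).connectedComponentMk ⟨v, hv⟩)} := by
        ext (i | C)
        · simp [hv]
        · simp [mem_componentBag_iff_of_notMem hv, eq_comm]
      rw [hbags, induce_singleton_eq_top]
      exact connected_top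

lemma ncard_componentBag_le (C : (G.induce Xᶜ).ConnectedComponent) :
    (componentBag G X C).ncard ≤ C.supp.ncard + (attachmentSet G X C).ncard := by
  unfold componentBag
  rw [← Set.ncard_image_of_injective C.supp Subtype.val_injective,
    ← Set.ncard_image_of_injective (attachmentSet G X C) Subtype.val_injective]
  exact Set.ncard_union_le _ _

end Torso

theorem treewidth_of_small_components {V : Type} [Fintype V] (G : SimpleGraph V) (X : Set V)
    (k q : ℕ) (htw : HasTreewidthLE (torso G X) k)
    (hcomp : ∀ C : (G.induce (Xᶜ : Set V)).ConnectedComponent, C.supp.ncard ≤ q) :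
    HasTreewidthLE G (q + k) := by
  obtain ⟨t, T, B, hTB, hB⟩ := htw
  choose f hf using fun C => hTB.exists_bag_superset_of_isClique (Set.toFinite _)
    (isClique_attachmentSet G X C)
  refine ⟨_, _, _, hTB.attachLeaves_componentBag f hf, ?_⟩
  rintro (i | C)
  · refine ⟨(hB i).1.image _, ?_⟩
    rw [Sum.elim_inl, Set.ncard_image_of_injective _ Subtype.val_injective]
    exact (hB i).2.trans (by omega)
  · refine ⟨Set.toFinite _, ?_⟩
    calc (componentBag G X C).ncard ≤ C.supp.ncard + (attachmentSet G X C).ncard :=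
          ncard_componentBag_le C
      _ ≤ q + (k + 1) :=
          add_le_add (hcomp C) ((Set.ncard_le_ncard (hf C) (hB (f C)).1).trans (hB (f C)).2)
end

section
/- Call (A, S, B) a (q,k)-separation of a graph G if (A, S, B) partitions V(G), there are no edges between A and B, |S| ≤ k, and |A|, |B| ≥ q. If G has no (q, k+1)-separation, then for every X ⊆ V(G) with tw(Torso_G(X)) ≤ k, either tw(G) ≤ q + k, or G − X has exactly one connected component C of size at least q + 1 and |V(G) \ (C ∪ N(C))| ≤ q. -/
open SimpleGraph

/-- `G` has a `(q,k)`-separation: a partition `(A,S,B)` of the vertex set with no edges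
between `A` and `B`, `|S| ≤ k`, and `|A|, |B| ≥ q`. -/
def HasSeparation {V : Type} (G : SimpleGraph V) (q k : ℕ) : Prop :=
  ∃ A S B : Set V, A ∪ S ∪ B = Set.univ ∧
    Disjoint A S ∧ Disjoint A B ∧ Disjoint S B ∧
    (∀ a ∈ A, ∀ b ∈ B, ¬ G.Adj a b) ∧
    S.ncard ≤ k ∧ q ≤ A.ncard ∧ q ≤ B.ncard

/-!
Let `C` be a component of `G - X`. Its neighbourhood `N(C)` is a clique of the torso, so by the
Helly property of subtrees of a tree it lies in a single bag of a width-`k` decomposition of the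
torso, whence `|N(C)| ≤ k + 1`. If every component has at most `q` vertices, hanging a new bag
`N(C) ∪ C` off such a bag for every `C` gives a decomposition of `G` of width at most `q + k`.
Otherwise, for a component `C` with more than `q` vertices, `(C, N(C), rest)` would be a
`(q, k + 1)`-separation unless the rest has at most `q` vertices; any other component lies in the
rest, so `C` is the only large one.
-/

namespace SimpleGraph

variable {t : Type*} {T : SimpleGraph t}

def IsPathConvex (T : SimpleGraph t) (s : Set t) : Prop :=
  ∀ ⦃u v : t⦄ (p : T.Walk u v), p.IsPath → u ∈ s → v ∈ s → ∀ x ∈ p.support, x ∈ s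

lemma IsPathConvex.inter {s s' : Set t} (hs : T.IsPathConvex s) (hs' : T.IsPathConvex s') :
    T.IsPathConvex (s ∩ s') :=
  fun _ _ p hp hu hv x hx => ⟨hs p hp hu.1 hv.1 x hx, hs' p hp hu.2 hv.2 x hx⟩

lemma IsAcyclic.isPathConvex_of_preconnected_induce (hT : T.IsAcyclic) {s : Set t}
    (hs : (T.induce s).Preconnected) : T.IsPathConvex s := by
  classical
  intro u v p hp hu hv x hx
  obtain ⟨w⟩ := hs ⟨u, hu⟩ ⟨v, hv⟩
  let w' : T.Walk u v := w.map (Embedding.induce s).toHom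
  have hpw : p = w'.bypass := congrArg Subtype.val ((hT.subsingleton_path u v).elim ⟨p, hp⟩ ⟨_, w'.bypass_isPath⟩)
  rw [hpw] at hx
  obtain ⟨y, -, rfl⟩ := List.mem_map.mp (w.support_map _ ▸ w'.support_bypass_subset_support hx)
  exact y.2

lemma Walk.IsPath.append_of_support_inter {u v w : t} {p : T.Walk u v} {q : T.Walk v w}
    (hp : p.IsPath) (hq : q.IsPath) (h : ∀ x ∈ p.support, x ∈ q.support → x = v) :
    (p.append q).IsPath := by
  rw [Walk.isPath_def, Walk.support_append]
  have hq' := (Walk.isPath_def q).mp hq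
  rw [← Walk.cons_tail_support q, List.nodup_cons] at hq'
  refine List.Nodup.append ((Walk.isPath_def p).mp hp) hq'.2 fun x hxp hxq => ?_
  obtain rfl := h x hxp (List.mem_of_mem_tail hxq)
  exact hq'.1 hxq

lemma Walk.exists_eq_append_of_first_mem {s : Set t} {u v : t} (w : T.Walk u v) (hv : v ∈ s) :
    ∃ m ∈ s, ∃ (w₁ : T.Walk u m) (w₂ : T.Walk m v),
      w = w₁.append w₂ ∧ ∀ x ∈ w₁.support, x ∈ s → x = m := by
  induction w with
  | nil => exact ⟨_, hv, Walk.nil, Walk.nil, rfl, by simp⟩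
  | @cons a _ _ hadj w ih =>
    by_cases ha : a ∈ s
    · exact ⟨a, ha, Walk.nil, Walk.cons hadj w, rfl, by simp⟩
    · obtain ⟨m, hm, w₁, w₂, rfl, hfirst⟩ := ih hv
      refine ⟨m, hm, Walk.cons hadj w₁, w₂, rfl, fun x hx hxs => ?_⟩
      rcases List.mem_cons.mp (Walk.support_cons hadj w₁ ▸ hx) with rfl | hx
      · exact absurd hxs ha
      · exact hfirst x hx hxs

lemma IsTree.exists_median (hT : T.IsTree) (a b c : t) :
    ∃ m, (∃ p : T.Walk a b, p.IsPath ∧ m ∈ p.support) ∧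
      (∃ p : T.Walk a c, p.IsPath ∧ m ∈ p.support) ∧
      (∃ p : T.Walk b c, p.IsPath ∧ m ∈ p.support) := by
  classical
  obtain ⟨p, hp, -⟩ := hT.existsUnique_path a b
  obtain ⟨q, hq, -⟩ := hT.existsUnique_path c a
  -- `m` is the first vertex of the path from `c` to `a` that lies on the path from `a` to `b`.
  obtain ⟨m, hm, w₁, w₂, rfl, hfirst⟩ :=
    q.exists_eq_append_of_first_mem (s := {x | x ∈ p.support}) p.start_mem_support
  have hw₁ : w₁.IsPath := hq.of_append_left
  have hpath : (w₁.append (p.dropUntil m hm)).IsPath :=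
    hw₁.append_of_support_inter (hp.dropUntil hm)
      fun x hx₁ hx₂ => hfirst x hx₁ (p.support_dropUntil_subset_support hm hx₂)
  refine ⟨m, ⟨p, hp, hm⟩, ⟨_, hq.reverse, ?_⟩, ⟨_, hpath.reverse, ?_⟩⟩ <;>
    simp [Walk.support_append]

lemma IsTree.inter_inter_nonempty (hT : T.IsTree) {s₁ s₂ s₃ : Set t} (h₁ : T.IsPathConvex s₁)
    (h₂ : T.IsPathConvex s₂) (h₃ : T.IsPathConvex s₃) (h₁₂ : (s₁ ∩ s₂).Nonempty)
    (h₁₃ : (s₁ ∩ s₃).Nonempty) (h₂₃ : (s₂ ∩ s₃).Nonempty) : (s₁ ∩ s₂ ∩ s₃).Nonempty := by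
  obtain ⟨a, ha₁, ha₂⟩ := h₁₂
  obtain ⟨b, hb₁, hb₃⟩ := h₁₃
  obtain ⟨c, hc₂, hc₃⟩ := h₂₃
  obtain ⟨m, ⟨p, hp, hmp⟩, ⟨p', hp', hmp'⟩, ⟨p'', hp'', hmp''⟩⟩ := hT.exists_median a b c
  exact ⟨m, ⟨h₁ p hp ha₁ hb₁ m hmp, h₂ p' hp' ha₂ hc₂ m hmp'⟩, h₃ p'' hp'' hb₃ hc₃ m hmp''⟩

theorem IsTree.exists_forall_mem_of_pairwise_inter_nonempty {ι : Type*} (hT : T.IsTree)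
    (S : Finset ι) (F : ι → Set t) (hF : ∀ i ∈ S, T.IsPathConvex (F i))
    (hpair : ∀ i ∈ S, ∀ j ∈ S, (F i ∩ F j).Nonempty) : ∃ m, ∀ i ∈ S, m ∈ F i := by
  classical
  -- Strengthen to any convex `s₀` meeting every `F i`; the induction shrinks `s₀` to `s₀ ∩ F j`.
  suffices key : ∀ s₀, T.IsPathConvex s₀ → s₀.Nonempty → (∀ i ∈ S, (s₀ ∩ F i).Nonempty) →
      ∃ m ∈ s₀, ∀ i ∈ S, m ∈ F i by
    obtain ⟨x⟩ := hT.connected.nonempty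
    obtain ⟨m, -, hm⟩ := key Set.univ (fun _ _ _ _ _ _ _ _ => trivial) ⟨x, trivial⟩ fun i hi => by
      simpa using hpair i hi i hi
    exact ⟨m, hm⟩
  induction S using Finset.induction_on with
  | empty => exact fun s₀ _ ⟨m, hm⟩ _ => ⟨m, hm, by simp⟩
  | insert j S hj ih =>
    simp only [Finset.mem_insert, forall_eq_or_imp] at hF hpair ⊢
    intro s₀ hs₀ _ ⟨hs₀j, hs₀S⟩
    obtain ⟨m, hm, hmS⟩ := ih hF.2 (fun i hi i' hi' => hpair.2 i hi |>.2 i' hi')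
      (s₀ ∩ F j) (hs₀.inter hF.1) hs₀j fun i hi =>
        hT.inter_inter_nonempty hs₀ hF.1 (hF.2 i hi) hs₀j (hs₀S i hi) (hpair.1.2 i hi)
    exact ⟨m, hm.1, hm.2, hmS⟩

end SimpleGraph

theorem IsTreeDecomp.exists_subset_bag_of_isClique {α t : Type} {H : SimpleGraph α}
    {T : SimpleGraph t} {B : t → Set α} (hdec : IsTreeDecomp H T B) {W : Set α} (hW : W.Finite)
    (hclq : H.IsClique W) : ∃ i, W ⊆ B i := by
  obtain ⟨hT, hcov, hedge, hconn⟩ := hdec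
  obtain ⟨i, hi⟩ := hT.exists_forall_mem_of_pairwise_inter_nonempty hW.toFinset
    (fun w => {i | w ∈ B i})
    (fun w _ => hT.isAcyclic.isPathConvex_of_preconnected_induce (hconn w).preconnected)
    fun w hw w' hw' => by
      by_cases hww : w = w'
      · subst hww
        obtain ⟨i, hi⟩ := hcov w
        exact ⟨i, hi, hi⟩
      · exact hedge (hclq (hW.mem_toFinset.mp hw) (hW.mem_toFinset.mp hw') hww)
  exact ⟨i, fun w hw => hi w (hW.mem_toFinset.mpr hw)⟩

namespace SimpleGraph

variable {t c : Type*} {T : SimpleGraph t} {f : c → t}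

def attachPendants (T : SimpleGraph t) (f : c → t) : SimpleGraph (t ⊕ c) where
  Adj
    | .inl i, .inl j => T.Adj i j
    | .inl i, .inr C => i = f C
    | .inr C, .inl i => i = f C
    | .inr _, .inr _ => False
  symm := ⟨by
    rintro (i | C) (j | D) h
    exacts [h.symm, h, h, h]⟩
  loopless := ⟨by
    rintro (i | C) h
    exacts [T.loopless.irrefl i h, h]⟩

lemma attachPendants_adj_inr {C : c} {y : t ⊕ c} :
    (attachPendants T f).Adj (.inr C) y ↔ y = .inl (f C) := by
  rcases y with i | D
  · exact ⟨congrArg Sum.inl, fun h => Sum.inl_injective h⟩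
  · exact ⟨False.elim, fun h => Sum.inr_ne_inl h |>.elim⟩

def attachPendantsInlHom (T : SimpleGraph t) (f : c → t) : T →g attachPendants T f :=
  ⟨Sum.inl, id⟩

lemma attachPendants_reachable_inl_elim (x : t ⊕ c) :
    (attachPendants T f).Reachable x (.inl (Sum.elim id f x)) := by
  rcases x with i | C
  · rfl
  · exact (attachPendants_adj_inr.mpr rfl).reachable

lemma attachPendants_connected (hT : T.Connected) : (attachPendants T f).Connected := by
  have : Nonempty (t ⊕ c) := hT.nonempty.map Sum.inl
  exact Connected.mk fun x y => (attachPendants_reachable_inl_elim x).trans <|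
    ((hT.preconnected _ _).map (attachPendantsInlHom T f)).trans
      (attachPendants_reachable_inl_elim y).symm

lemma attachPendants_isBridge_pendant (C : c) :
    (attachPendants T f).IsBridge s(.inr C, .inl (f C)) := by
  rintro ⟨w⟩
  cases w with
  | cons h _ =>
    rw [deleteEdges_adj, attachPendants_adj_inr] at h
    obtain ⟨rfl, hne⟩ := h
    exact hne rfl

lemma attachPendants_reachable_deleteEdges {i j : t} {x y : t ⊕ c}
    (h : ((attachPendants T f).deleteEdges {s(.inl i, .inl j)}).Reachable x y) :
    (T.deleteEdges {s(i, j)}).Reachable (Sum.elim id f x) (Sum.elim id f y) := by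
  rw [reachable_iff_reflTransGen] at h ⊢
  refine Relation.ReflTransGen.lift' (Sum.elim id f) ?_ _ _ h
  rintro (a | C) (b | D) ⟨hab, hne⟩
  · refine .single ⟨hab, fun he => hne ?_⟩
    simpa only [fromEdgeSet_adj, Set.mem_singleton_iff, Sym2.eq_iff, Sum.elim_inl, id, ne_eq,
      Sum.inl_injective.eq_iff] using he
  · exact hab ▸ .refl
  · exact hab ▸ .refl
  · exact hab.elim

lemma attachPendants_isAcyclic (hT : T.IsAcyclic) : (attachPendants T f).IsAcyclic := by
  rw [isAcyclic_iff_forall_adj_isBridge] at hT ⊢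
  rintro (i | C) (j | D) h
  · exact fun hr => hT h (attachPendants_reachable_deleteEdges hr)
  · obtain rfl : i = f D := h
    exact Sym2.eq_swap ▸ attachPendants_isBridge_pendant D
  · obtain rfl : j = f C := h
    exact attachPendants_isBridge_pendant C
  · exact h.elim

lemma attachPendants_isTree (hT : T.IsTree) : (attachPendants T f).IsTree :=
  ⟨attachPendants_connected hT.connected, attachPendants_isAcyclic hT.isAcyclic⟩

lemma attachPendants_induce_preimage_connected {s : Set t} (hs : (T.induce s).Connected) :
    ((attachPendants T f).induce (Sum.elim id f ⁻¹' s)).Connected := by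
  have : Nonempty (Sum.elim id f ⁻¹' s) := hs.nonempty.map fun i => ⟨.inl i.1, i.2⟩
  let g : T.induce s →g (attachPendants T f).induce (Sum.elim id f ⁻¹' s) :=
    ⟨fun i => ⟨.inl i.1, i.2⟩, id⟩
  have toInl : ∀ x : Sum.elim id f ⁻¹' s, ((attachPendants T f).induce _).Reachable x
      (g ⟨Sum.elim id f x.1, x.2⟩) := by
    rintro ⟨i | C, hx⟩
    · rfl
    · exact Adj.reachable (show f C = f C from rfl)
  exact Connected.mk fun x y =>
    (toInl x).trans (((hs.preconnected _ _).map g).trans (toInl y).symm)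

end SimpleGraph

section TorsoDecomposition

variable {V : Type} {G : SimpleGraph V} {X : Set V}

def componentNeighborSet (C : (G.induce Xᶜ).ConnectedComponent) : Set X :=
  {x | ∃ u ∈ C.supp, G.Adj x u}

lemma torso_isClique_componentNeighborSet (C : (G.induce Xᶜ).ConnectedComponent) :
    (torso G X).IsClique (componentNeighborSet C) := by
  rintro a ⟨u, hu, hau⟩ b ⟨u', hu', hbu'⟩ hne
  exact ⟨hne, .inr ⟨u, u', hau, hbu', ConnectedComponent.exact (hu.trans hu'.symm)⟩⟩

lemma image_val_componentNeighborSet (C : (G.induce Xᶜ).ConnectedComponent) :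
    Subtype.val '' componentNeighborSet C =
      {v | v ∉ Subtype.val '' C.supp ∧ ∃ u ∈ C.supp, G.Adj v u} := by
  ext v
  constructor
  · rintro ⟨x, hx, rfl⟩
    exact ⟨fun ⟨u, _, hux⟩ => u.2 (hux ▸ x.2), hx⟩
  · rintro ⟨hvC, u, hu, hvu⟩
    by_cases hv : v ∈ X
    · exact ⟨⟨v, hv⟩, ⟨u, hu, hvu⟩, rfl⟩
    · have hvu' : (G.induce Xᶜ).Adj ⟨v, hv⟩ u := hvu
      exact absurd ⟨⟨v, hv⟩, (ConnectedComponent.sound hvu'.reachable).trans hu, rfl⟩ hvC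

lemma HasTreewidthLE.ncard_componentNeighborSet_le [Finite V] {k : ℕ}
    (htw : HasTreewidthLE (torso G X) k) (C : (G.induce Xᶜ).ConnectedComponent) :
    (componentNeighborSet C).ncard ≤ k + 1 := by
  obtain ⟨t, T, B, hdec, hbags⟩ := htw
  obtain ⟨i, hi⟩ :=
    hdec.exists_subset_bag_of_isClique (Set.toFinite _) (torso_isClique_componentNeighborSet C)
  exact (Set.ncard_le_ncard hi (hbags i).1).trans (hbags i).2

lemma image_val_supp_subset_of_ne {C C' : (G.induce Xᶜ).ConnectedComponent} (h : C' ≠ C) :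
    Subtype.val '' C'.supp ⊆ Set.univ \ (Subtype.val '' C.supp ∪
      {v | v ∉ Subtype.val '' C.supp ∧ ∃ u ∈ C.supp, G.Adj v u}) := by
  rintro _ ⟨u, hu, rfl⟩
  refine ⟨trivial, ?_⟩
  rintro (⟨u', hu', hval⟩ | hN)
  · obtain rfl := Subtype.val_injective hval
    exact h (hu.symm.trans hu')
  · rw [← image_val_componentNeighborSet] at hN
    obtain ⟨x, -, hx⟩ := hN
    exact u.2 (hx ▸ x.2)

def componentBags {t : Type} (B : t → Set X) (f : (G.induce Xᶜ).ConnectedComponent → t) :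
    t ⊕ (G.induce Xᶜ).ConnectedComponent → Set V :=
  Sum.elim (fun i => Subtype.val '' B i) fun C => Subtype.val '' B (f C) ∪ Subtype.val '' C.supp

variable {t : Type} {B : t → Set X} {f : (G.induce Xᶜ).ConnectedComponent → t}

lemma mem_componentBags_of_mem {v : V} (hv : v ∈ X) (x : t ⊕ (G.induce Xᶜ).ConnectedComponent) :
    v ∈ componentBags B f x ↔ ⟨v, hv⟩ ∈ B (Sum.elim id f x) := by
  rcases x with i | C
  · simp [componentBags, hv]
  · have hvC : v ∉ Subtype.val '' C.supp := fun h => Subtype.coe_image_subset _ _ h hv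
    simp [componentBags, hv, hvC]

lemma mem_componentBags_of_notMem {v : V} (hv : v ∉ X) (x : t ⊕ (G.induce Xᶜ).ConnectedComponent) :
    v ∈ componentBags B f x ↔ x = .inr ((G.induce Xᶜ).connectedComponentMk ⟨v, hv⟩) := by
  rcases x with i | C
  · simp [componentBags, hv]
  · simp [componentBags, hv, eq_comm]

theorem IsTreeDecomp.of_torso {T : SimpleGraph t} (hdec : IsTreeDecomp (torso G X) T B)
    (hf : ∀ C, componentNeighborSet C ⊆ B (f C)) :
    IsTreeDecomp G (T.attachPendants f) (componentBags B f) := by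
  obtain ⟨hT, hcov, hedge, hconn⟩ := hdec
  have hcomp : ∀ {u v : V} (hv : v ∉ X), G.Adj u v →
      u ∈ componentBags B f (.inr ((G.induce Xᶜ).connectedComponentMk ⟨v, hv⟩)) := by
    intro u v hv huv
    by_cases hu : u ∈ X
    · exact (mem_componentBags_of_mem hu _).mpr (hf _ ⟨⟨v, hv⟩, rfl, huv⟩)
    · have huv' : (G.induce Xᶜ).Adj ⟨u, hu⟩ ⟨v, hv⟩ := huv
      exact (mem_componentBags_of_notMem hu _).mpr
        (congrArg Sum.inr (ConnectedComponent.sound huv'.symm.reachable))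
  refine ⟨attachPendants_isTree hT, fun v => ?_, fun u v huv => ?_, fun v => ?_⟩
  · by_cases hv : v ∈ X
    · obtain ⟨i, hi⟩ := hcov ⟨v, hv⟩
      exact ⟨.inl i, (mem_componentBags_of_mem hv _).mpr hi⟩
    · exact ⟨_, (mem_componentBags_of_notMem hv _).mpr rfl⟩
  · by_cases hv : v ∈ X
    · by_cases hu : u ∈ X
      · obtain ⟨i, hui, hvi⟩ := hedge (show (torso G X).Adj ⟨u, hu⟩ ⟨v, hv⟩ from
          ⟨fun h => huv.ne (congrArg Subtype.val h), .inl huv⟩)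
        exact ⟨.inl i, (mem_componentBags_of_mem hu _).mpr hui,
          (mem_componentBags_of_mem hv _).mpr hvi⟩
      · exact ⟨_, (mem_componentBags_of_notMem hu _).mpr rfl, hcomp hu huv.symm⟩
    · exact ⟨_, hcomp hv huv, (mem_componentBags_of_notMem hv _).mpr rfl⟩
  · by_cases hv : v ∈ X
    · have hbags : {x | v ∈ componentBags B f x} = Sum.elim id f ⁻¹' {i | ⟨v, hv⟩ ∈ B i} :=
        Set.ext (mem_componentBags_of_mem hv)
      rw [hbags]
      exact attachPendants_induce_preimage_connected (hconn _)
    · have hbags : {x | v ∈ componentBags B f x} =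
          {.inr ((G.induce Xᶜ).connectedComponentMk ⟨v, hv⟩)} :=
        Set.ext (mem_componentBags_of_notMem hv)
      rw [hbags, induce_singleton_eq_top]
      exact connected_top

end TorsoDecomposition

theorem HasTreewidthLE.of_torso {V : Type} [Finite V] {G : SimpleGraph V} {X : Set V} {q k : ℕ}
    (htw : HasTreewidthLE (torso G X) k)
    (hsmall : ∀ C : (G.induce Xᶜ).ConnectedComponent, (Subtype.val '' C.supp).ncard ≤ q) :
    HasTreewidthLE G (q + k) := by
  obtain ⟨t, T, B, hdec, hbags⟩ := htw
  choose f hf using fun C => hdec.exists_subset_bag_of_isClique (Set.toFinite _)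
    (torso_isClique_componentNeighborSet C)
  refine ⟨_, _, _, hdec.of_torso hf, fun x => ⟨Set.toFinite _, ?_⟩⟩
  rcases x with i | C
  · have := (hbags i).2
    simp only [componentBags, Sum.elim_inl, Set.ncard_image_of_injective _ Subtype.val_injective]
    omega
  · have := (hbags (f C)).2
    have := hsmall C
    have := Set.ncard_union_le (Subtype.val '' B (f C)) (Subtype.val '' C.supp)
    simp only [componentBags, Sum.elim_inr, Set.ncard_image_of_injective _ Subtype.val_injective] at *
    omega

lemma hasSeparation_of_adj_mem_union {V : Type} {G : SimpleGraph V} {q k : ℕ} {A S : Set V}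
    (hAS : Disjoint A S) (hadj : ∀ a ∈ A, ∀ v, G.Adj a v → v ∈ A ∪ S) (hS : S.ncard ≤ k)
    (hA : q ≤ A.ncard) (hD : q ≤ (Set.univ \ (A ∪ S)).ncard) : HasSeparation G q k :=
  ⟨A, S, Set.univ \ (A ∪ S), by simp, hAS, Set.disjoint_left.mpr fun _ ha hd => hd.2 (.inl ha),
    Set.disjoint_left.mpr fun _ hs hd => hd.2 (.inr hs), fun a ha _ hb hab => hb.2 (hadj a ha _ hab),
    hS, hA, hD⟩

theorem unbreakable_implies_nice {V : Type} [Fintype V] (G : SimpleGraph V) (q k : ℕ)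
    (hsep : ¬ HasSeparation G q (k + 1)) (X : Set V)
    (htw : HasTreewidthLE (torso G X) k) :
    HasTreewidthLE G (q + k) ∨
    ∃ C : (G.induce (Xᶜ : Set V)).ConnectedComponent,
      q + 1 ≤ (Subtype.val '' C.supp).ncard ∧
      (∀ C' : (G.induce (Xᶜ : Set V)).ConnectedComponent,
        q + 1 ≤ (Subtype.val '' C'.supp).ncard → C' = C) ∧
      (Set.univ \ ((Subtype.val '' C.supp) ∪
        {v : V | v ∉ Subtype.val '' C.supp ∧ ∃ u ∈ C.supp, G.Adj v (u : V)})).ncard ≤ q := by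
  by_cases hbig : ∃ C : (G.induce (Xᶜ : Set V)).ConnectedComponent,
      q + 1 ≤ (Subtype.val '' C.supp).ncard
  · right
    obtain ⟨C, hC⟩ := hbig
    have hS := htw.ncard_componentNeighborSet_le C
    rw [← Set.ncard_image_of_injective _ Subtype.val_injective,
      image_val_componentNeighborSet] at hS
    set A := Subtype.val '' C.supp
    set S := {v : V | v ∉ A ∧ ∃ u ∈ C.supp, G.Adj v (u : V)}
    have hD : (Set.univ \ (A ∪ S)).ncard ≤ q := by
      by_contra! hD
      refine hsep (hasSeparation_of_adj_mem_union (Set.disjoint_left.mpr fun v hv h => h.1 hv)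
        ?_ hS (by omega) hD.le)
      rintro _ ⟨u, hu, rfl⟩ v huv
      by_cases hv : v ∈ A
      exacts [.inl hv, .inr ⟨hv, u, hu, huv.symm⟩]
    refine ⟨C, hC, fun C' hC' => ?_, hD⟩
    by_contra hne
    have := (Set.ncard_le_ncard (image_val_supp_subset_of_ne hne) (Set.toFinite _)).trans hD
    omega
  · push Not at hbig
    exact .inl (htw.of_torso fun C => Nat.le_of_lt_succ (hbig C))
end
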